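/- Let F be a finite field of odd cardinality q. Then for every integer k, the unitary Cayley graph of the product ring F × (ℤ/2ℤ)[x]/(x²) does not have quantum fractional revival from any vertex u to any vertex v at time τ = kπ/q. -/

import Mathlib

open Matrix

/-- The standard basis vector `e_u` in `ℂ^V`. -/
noncomputable def stdVec {V : Type*} (u : V) : V → ℂ :=
  letI := Classical.decEq V
  Pi.single u 1

/-- The transition matrix `H(t) = exp(i t A)` of a graph with adjacency matrix `A`. -/
noncomputable def transMatrix {V : Type*} [Fintype V] (A : Matrix V V ℂ) (t : ℝ) :
    Matrix V V ℂ :=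
  letI := Classical.decEq V
  NormedSpace.exp ((Complex.I * (t : ℂ)) • A)

/-- Quantum fractional revival from `u` to `v` at time `t`. -/
def hasQFR {V : Type*} [Fintype V] (A : Matrix V V ℂ) (u v : V) (t : ℝ) : Prop :=
  u ≠ v ∧ ∃ α β : ℂ, β ≠ 0 ∧
    (transMatrix A t) *ᵥ stdVec u = α • stdVec u + β • stdVec v

/-- The unitary Cayley graph of a commutative ring: distinct `a, b` are adjacent
iff `a - b` is a unit. -/
def unitaryCayleyGraph (R : Type*) [CommRing R] : SimpleGraph R where
  Adj a b := a ≠ b ∧ IsUnit (a - b)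
  symm := ⟨by
    rintro a b ⟨h1, h2⟩
    refine ⟨h1.symm, ?_⟩
    rw [← neg_sub]
    exact h2.neg⟩
  loopless := ⟨fun a h => h.1 rfl⟩

/-- The adjacency matrix (over `ℂ`) of the unitary Cayley graph of `R`. -/
noncomputable def ucMatrix (R : Type*) [CommRing R] : Matrix R R ℂ :=
  letI := Classical.decEq R
  letI := Classical.decRel (unitaryCayleyGraph R).Adj
  (unitaryCayleyGraph R).adjMatrix ℂ

/-- The adjacency matrix (over `ℂ`) of a simple graph. -/
noncomputable def adjMat {V : Type*} (G : SimpleGraph V) : Matrix V V ℂ :=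
  letI := Classical.decEq V
  letI := Classical.decRel G.Adj
  G.adjMatrix ℂ

instance : Fintype (DualNumber (ZMod 2)) :=
  inferInstanceAs (Fintype (ZMod 2 × ZMod 2))

/-!
The adjacency matrix factors as `A = (J - 1) ⊗ B`, with `J` the all-ones `q × q` matrix and `B`
the adjacency matrix of the 4-cycle `G_{(ℤ/2)[ε]}`. Both `J ⊗ B` and `1 ⊗ B` satisfy `M³ = c²M`
(with `c = 2q` and `c = 2`), which makes `exp (wM)` an explicit quadratic polynomial in `M`. At
`t = kπ/q` the factor `exp (it J ⊗ B)` is the identity, so `H(t) = exp (-it 1 ⊗ B)`, and this matrix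
gives the same amplitude `sinh (-2it) / 2` to both neighbours of `u` in its 4-cycle. One of them is
not `v`, so this amplitude vanishes; then `e^{-2it}` is a square root of unity and a `q`-th root of
unity, hence `1` as `q` is odd, and `H(t) = 1` has no off-diagonal entry at all.
-/

open NormedSpace Kronecker

section BanachAlgebra

variable {𝔸 : Type*} [NormedRing 𝔸] [NormedAlgebra ℂ 𝔸] [CompleteSpace 𝔸]

theorem exp_smul_of_isIdempotentElem {E : 𝔸} (hE : IsIdempotentElem E) (w : ℂ) :
    exp (w • E) = 1 + (Complex.exp w - 1) • E := by
  have hscalar : HasSum (fun n : ℕ => ((n.factorial⁻¹ : ℂ) • w ^ n) • E) (Complex.exp w • E) := by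
    rw [Complex.exp_eq_exp_ℂ]
    exact (exp_series_hasSum_exp' w).smul_const E
  have hterm : ∀ n : ℕ, (n.factorial⁻¹ : ℂ) • (w • E) ^ n =
      ((n.factorial⁻¹ : ℂ) • w ^ n) • E + if n = 0 then 1 - E else 0 := by
    rintro (_ | n)
    · simp
    · simp [smul_pow, hE.pow_succ_eq, smul_smul]
  refine (exp_series_hasSum_exp' (𝕂 := ℂ) (w • E)).unique ?_
  simp_rw [hterm]
  convert hscalar.add (hasSum_ite_eq 0 (1 - E)) using 1
  rw [sub_smul, one_smul]
  abel

theorem exp_smul_add_smul_of_isIdempotentElem {P Q : 𝔸} (hP : IsIdempotentElem P)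
    (hQ : IsIdempotentElem Q) (hPQ : P * Q = 0) (hQP : Q * P = 0) (a b : ℂ) :
    exp (a • P + b • Q) = 1 + (Complex.exp a - 1) • P + (Complex.exp b - 1) • Q := by
  let _ : NormedAlgebra ℚ 𝔸 := .restrictScalars ℚ ℂ 𝔸
  have hcomm : Commute (a • P) (b • Q) :=
    ((show Commute P Q by rw [Commute, SemiconjBy, hPQ, hQP]).smul_left a).smul_right b
  rw [exp_add_of_commute hcomm, exp_smul_of_isIdempotentElem hP, exp_smul_of_isIdempotentElem hQ]
  simp only [mul_add, add_mul, one_mul, mul_one, smul_mul_smul, hPQ, smul_zero, add_zero]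

theorem exp_smul_of_mul_mul_eq_sq_smul {M : 𝔸} {c : ℂ} (hc : c ≠ 0)
    (hM : M * M * M = c ^ 2 • M) (w : ℂ) :
    exp (w • M) = 1 + (Complex.sinh (w * c) / c) • M +
      ((Complex.cosh (w * c) - 1) / c ^ 2) • (M * M) := by
  have hM3 : M * (M * M) = c ^ 2 • M := by rw [← mul_assoc, hM]
  have hM4 : M * M * (M * M) = c ^ 2 • (M * M) := by rw [← mul_assoc, hM, smul_mul_assoc]
  -- `M = cP - cQ` for the orthogonal spectral idempotents `P, Q` of the eigenvalues `c, -c`.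
  set P : 𝔸 := (2 * c ^ 2)⁻¹ • (M * M + c • M)
  set Q : 𝔸 := (2 * c ^ 2)⁻¹ • (M * M - c • M)
  have hP : IsIdempotentElem P := by
    simp only [P, IsIdempotentElem, mul_add, add_mul, smul_mul_assoc, mul_smul_comm, smul_smul,
      hM, hM3, hM4]
    match_scalars <;> field_simp <;> ring
  have hQ : IsIdempotentElem Q := by
    simp only [Q, IsIdempotentElem, mul_sub, sub_mul, smul_mul_assoc, mul_smul_comm, smul_smul,
      hM, hM3, hM4]
    match_scalars <;> field_simp <;> ring
  have hPQ : P * Q = 0 := by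
    simp only [P, Q, mul_sub, add_mul, smul_mul_assoc, mul_smul_comm, smul_smul, hM, hM3, hM4]
    match_scalars <;> ring
  have hQP : Q * P = 0 := by
    simp only [P, Q, mul_add, sub_mul, smul_mul_assoc, mul_smul_comm, smul_smul, hM, hM3, hM4]
    match_scalars <;> ring
  have hwM : w • M = (w * c) • P + (-(w * c)) • Q := by
    simp only [P, Q, smul_add, smul_sub, smul_smul]
    match_scalars <;> field_simp <;> ring
  rw [hwM, exp_smul_add_smul_of_isIdempotentElem hP hQ hPQ hQP, Complex.sinh, Complex.cosh]
  simp only [P, Q, smul_add, smul_sub, smul_smul]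
  match_scalars <;> field_simp <;> ring

theorem exp_smul_eq_one_of_mul_mul_eq_sq_smul {M : 𝔸} {c : ℂ} (hc : c ≠ 0)
    (hM : M * M * M = c ^ 2 • M) {w : ℂ} (hw : Complex.exp (w * c) = 1) :
    exp (w • M) = 1 := by
  rw [exp_smul_of_mul_mul_eq_sq_smul hc hM, Complex.sinh, Complex.cosh, Complex.exp_neg, hw]
  simp

end BanachAlgebra

theorem Complex.exp_sq_eq_one_of_sinh_eq_zero {x : ℂ} (h : Complex.sinh x = 0) :
    Complex.exp x ^ 2 = 1 := by
  have hinv : Complex.exp x * Complex.exp (-x) = 1 := by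
    rw [← Complex.exp_add, add_neg_cancel, Complex.exp_zero]
  rw [Complex.sinh, div_eq_zero_iff, sub_eq_zero] at h
  linear_combination Complex.exp x * h.resolve_right two_ne_zero + hinv

theorem eq_one_of_sq_eq_one_of_pow_eq_one {M : Type*} [Monoid M] {x : M} {q : ℕ} (hodd : Odd q)
    (h2 : x ^ 2 = 1) (hxq : x ^ q = 1) : x = 1 := by
  simpa [(Nat.coprime_two_left.mpr hodd).gcd_eq_one] using pow_gcd_eq_one.mpr ⟨h2, hxq⟩

theorem Complex.exp_I_mul_int_mul_pi_div_mul_two_mul (k : ℤ) {q : ℕ} (hq : q ≠ 0) :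
    Complex.exp (Complex.I * ((k * Real.pi / q : ℝ) : ℂ) * (2 * q)) = 1 := by
  convert Complex.exp_int_mul_two_pi_mul_I k using 2
  push_cast
  field_simp

theorem transMatrix_eq_exp {V : Type*} [Fintype V] [DecidableEq V] (A : Matrix V V ℂ) (t : ℝ) :
    transMatrix A t = exp ((Complex.I * t) • A) := by
  obtain rfl : ‹DecidableEq V› = Classical.decEq V := Subsingleton.elim _ _
  rfl

theorem stdVec_apply {V : Type*} [DecidableEq V] (u p : V) :
    stdVec u p = if p = u then 1 else 0 := by
  unfold stdVec
  convert Pi.single_apply u (1 : ℂ) p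

theorem mulVec_stdVec {V : Type*} [Fintype V] (M : Matrix V V ℂ) (u : V) :
    M *ᵥ stdVec u = fun p => M p u :=
  letI := Classical.decEq V
  M.mulVec_single_one u

namespace hasQFR

variable {V : Type*} [Fintype V] {A : Matrix V V ℂ} {u v : V} {t : ℝ}

theorem transMatrix_apply_eq_zero (h : hasQFR A u v t) {p : V} (hpu : p ≠ u) (hpv : p ≠ v) :
    transMatrix A t p u = 0 := by
  classical
  obtain ⟨-, α, β, -, hcol⟩ := h
  simpa [mulVec_stdVec, stdVec_apply, hpu, hpv] using congrFun hcol p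

theorem transMatrix_apply_ne_zero (h : hasQFR A u v t) : transMatrix A t v u ≠ 0 := by
  classical
  obtain ⟨huv, α, β, hβ, hcol⟩ := h
  have hv : transMatrix A t v u = β := by
    simpa [mulVec_stdVec, stdVec_apply, huv.symm] using congrFun hcol v
  exact hv ▸ hβ

end hasQFR

section UnitaryCayleyGraph

variable {R S : Type*} [CommRing R] [CommRing S]

theorem unitaryCayleyGraph_adj_iff [Nontrivial R] {a b : R} :
    (unitaryCayleyGraph R).Adj a b ↔ IsUnit (a - b) :=
  ⟨And.right, fun h => ⟨sub_ne_zero.mp h.ne_zero, h⟩⟩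

theorem ucMatrix_prod [Nontrivial R] [Nontrivial S] :
    ucMatrix (R × S) = ucMatrix R ⊗ₖ ucMatrix S := by
  classical
  ext ⟨a, x⟩ ⟨b, y⟩
  simp only [ucMatrix, SimpleGraph.adjMatrix_apply, unitaryCayleyGraph_adj_iff, Prod.isUnit_iff,
    kroneckerMap_apply, Prod.mk_sub_mk, ite_and, ite_mul, one_mul, zero_mul]

theorem ucMatrix_dualNumber [Nontrivial R] :
    ucMatrix (DualNumber R) = (ucMatrix R).submatrix TrivSqZeroExt.fst TrivSqZeroExt.fst := by
  classical
  ext x y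
  simp [ucMatrix, SimpleGraph.adjMatrix_apply, unitaryCayleyGraph_adj_iff,
    TrivSqZeroExt.isUnit_iff_isUnit_fst]

theorem ucMatrix_of_field (F : Type*) [Field F] [DecidableEq F] :
    ucMatrix F = Matrix.of (fun _ _ => 1) - 1 := by
  ext a b
  by_cases h : a = b <;>
    simp [ucMatrix, SimpleGraph.adjMatrix_apply, unitaryCayleyGraph_adj_iff, sub_eq_zero, h]

end UnitaryCayleyGraph

section MatrixAlgebra

variable {l l' m n o o' α : Type*}

theorem Matrix.submatrix_mul_submatrix_of_card_fiber [Fintype m] [Fintype n] [DecidableEq n]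
    [NonUnitalNonAssocSemiring α] {f : m → n} {k : ℕ}
    (hf : ∀ b, (Finset.univ.filter fun a => f a = b).card = k)
    (M : Matrix l n α) (N : Matrix n o α) (e : l' → l) (g : o' → o) :
    M.submatrix e f * N.submatrix f g = k • (M * N).submatrix e g := by
  ext x y
  simp only [mul_apply, submatrix_apply, smul_apply, Finset.smul_sum]
  rw [← Finset.sum_fiberwise Finset.univ f]
  refine Finset.sum_congr rfl fun b _ => ?_
  rw [Finset.sum_congr rfl fun a ha => by rw [(Finset.mem_filter.mp ha).2], Finset.sum_const, hf]

theorem Matrix.of_one_mul_of_one [Fintype n] [NonAssocSemiring α] :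
    (of fun _ _ => 1 : Matrix n n α) * of (fun _ _ => 1) =
      (Fintype.card n : α) • of fun _ _ => 1 := by
  ext
  simp [mul_apply]

theorem Matrix.kronecker_mul_mul_eq_smul [Fintype m] [Fintype n] [CommSemiring α]
    {M : Matrix m m α} {N : Matrix n n α} {a b : α}
    (hM : M * M * M = a • M) (hN : N * N * N = b • N) :
    (M ⊗ₖ N) * (M ⊗ₖ N) * (M ⊗ₖ N) = (a * b) • (M ⊗ₖ N) := by
  rw [← mul_kronecker_mul, ← mul_kronecker_mul, hM, hN, smul_kronecker, kronecker_smul, smul_smul]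

theorem Matrix.exp_smul_of_mul_mul_eq_sq_smul [Fintype n] [DecidableEq n] {M : Matrix n n ℂ}
    {c : ℂ} (hc : c ≠ 0) (hM : M * M * M = c ^ 2 • M) (w : ℂ) :
    exp (w • M) = 1 + (Complex.sinh (w * c) / c) • M +
      ((Complex.cosh (w * c) - 1) / c ^ 2) • (M * M) := by
  open scoped Matrix.Norms.Operator in exact _root_.exp_smul_of_mul_mul_eq_sq_smul hc hM w

theorem Matrix.exp_smul_eq_one_of_mul_mul_eq_sq_smul [Fintype n] [DecidableEq n]
    {M : Matrix n n ℂ} {c : ℂ} (hc : c ≠ 0) (hM : M * M * M = c ^ 2 • M) {w : ℂ}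
    (hw : Complex.exp (w * c) = 1) : exp (w • M) = 1 := by
  open scoped Matrix.Norms.Operator in exact _root_.exp_smul_eq_one_of_mul_mul_eq_sq_smul hc hM hw

end MatrixAlgebra

theorem ucMatrix_zmod_two_mul_self : ucMatrix (ZMod 2) * ucMatrix (ZMod 2) = 1 := by
  rw [ucMatrix_of_field, sub_mul, mul_sub, mul_sub, Matrix.of_one_mul_of_one, ZMod.card]
  simp only [mul_one, one_mul, Nat.cast_ofNat, two_smul]
  abel

theorem card_filter_fst_eq_two (b : ZMod 2) :
    (Finset.univ.filter fun x : DualNumber (ZMod 2) => x.fst = b).card = 2 := by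
  revert b
  decide

theorem ucMatrix_dualNumber_zmod_two_mul_self :
    ucMatrix (DualNumber (ZMod 2)) * ucMatrix (DualNumber (ZMod 2)) =
      2 • (1 : Matrix (ZMod 2) (ZMod 2) ℂ).submatrix TrivSqZeroExt.fst TrivSqZeroExt.fst := by
  rw [ucMatrix_dualNumber, Matrix.submatrix_mul_submatrix_of_card_fiber card_filter_fst_eq_two,
    ucMatrix_zmod_two_mul_self]

theorem ucMatrix_dualNumber_zmod_two_cube :
    ucMatrix (DualNumber (ZMod 2)) * ucMatrix (DualNumber (ZMod 2)) *
      ucMatrix (DualNumber (ZMod 2)) = (2 : ℂ) ^ 2 • ucMatrix (DualNumber (ZMod 2)) := by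
  rw [ucMatrix_dualNumber_zmod_two_mul_self, ucMatrix_dualNumber, smul_mul_assoc,
    Matrix.submatrix_mul_submatrix_of_card_fiber card_filter_fst_eq_two, one_mul, smul_smul,
    ← Nat.cast_smul_eq_nsmul ℂ]
  norm_num

theorem DualNumber.exists_fst_ne_and_ne {R : Type*} [Ring R] [Nontrivial R] (y w : DualNumber R) :
    ∃ x : DualNumber R, x.fst ≠ y.fst ∧ x ≠ w := by
  by_cases h : y + 1 = w
  · refine ⟨y + 1 + DualNumber.eps, by simp, fun h' => ?_⟩
    simpa using congrArg TrivSqZeroExt.snd (h'.trans h.symm)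
  · exact ⟨y + 1, by simp, h⟩

section FieldProdDualNumber

variable {F : Type*} [Fintype F] [DecidableEq F]

theorem exp_smul_ucMatrix_field_prod_dualNumber [Field F]
    [DecidableEq (F × DualNumber (ZMod 2))] {w : ℂ}
    (hw : Complex.exp (w * (2 * Fintype.card F)) = 1) :
    exp (w • ucMatrix (F × DualNumber (ZMod 2))) =
      exp ((-w) • ((1 : Matrix F F ℂ) ⊗ₖ ucMatrix (DualNumber (ZMod 2)))) := by
  set B := ucMatrix (DualNumber (ZMod 2))
  set J : Matrix F F ℂ := of fun _ _ => 1
  have hJ : J * J * J = (Fintype.card F : ℂ) ^ 2 • J := by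
    rw [Matrix.of_one_mul_of_one, smul_mul_assoc, Matrix.of_one_mul_of_one, smul_smul, sq]
  have hJB : J ⊗ₖ B * (J ⊗ₖ B) * (J ⊗ₖ B) = (2 * Fintype.card F : ℂ) ^ 2 • (J ⊗ₖ B) := by
    rw [Matrix.kronecker_mul_mul_eq_smul hJ ucMatrix_dualNumber_zmod_two_cube, mul_pow, mul_comm]
  have hJB_exp : exp (w • (J ⊗ₖ B)) = 1 :=
    Matrix.exp_smul_eq_one_of_mul_mul_eq_sq_smul (by simp) hJB hw
  have hcomm : Commute (w • (J ⊗ₖ B)) ((-w) • ((1 : Matrix F F ℂ) ⊗ₖ B)) := by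
    refine ((Commute.smul_left ?_ w).smul_right (-w))
    rw [Commute, SemiconjBy, ← mul_kronecker_mul, ← mul_kronecker_mul, mul_one, one_mul]
  have hsplit : ucMatrix (F × DualNumber (ZMod 2)) = J ⊗ₖ B - 1 ⊗ₖ B := by
    rw [ucMatrix_prod, ucMatrix_of_field, eq_sub_iff_add_eq, ← add_kronecker, sub_add_cancel]
  rw [hsplit, smul_sub, sub_eq_add_neg, ← neg_smul, Matrix.exp_add_of_commute _ _ hcomm,
    hJB_exp, one_mul]

theorem one_kronecker_ucMatrix_dualNumber_cube :
    (1 : Matrix F F ℂ) ⊗ₖ ucMatrix (DualNumber (ZMod 2)) *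
        ((1 : Matrix F F ℂ) ⊗ₖ ucMatrix (DualNumber (ZMod 2))) *
        ((1 : Matrix F F ℂ) ⊗ₖ ucMatrix (DualNumber (ZMod 2))) =
      (2 : ℂ) ^ 2 • ((1 : Matrix F F ℂ) ⊗ₖ ucMatrix (DualNumber (ZMod 2))) := by
  rw [Matrix.kronecker_mul_mul_eq_smul (a := 1) (by simp) ucMatrix_dualNumber_zmod_two_cube,
    one_mul]

theorem exp_smul_one_kronecker_ucMatrix_dualNumber_apply [DecidableEq (F × DualNumber (ZMod 2))]
    (w : ℂ) (a : F) {x y : DualNumber (ZMod 2)} (hxy : x.fst ≠ y.fst) :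
    exp (w • ((1 : Matrix F F ℂ) ⊗ₖ ucMatrix (DualNumber (ZMod 2)))) (a, x) (a, y) =
      Complex.sinh (w * 2) / 2 := by
  rw [Matrix.exp_smul_of_mul_mul_eq_sq_smul two_ne_zero one_kronecker_ucMatrix_dualNumber_cube,
    ← mul_kronecker_mul, ucMatrix_dualNumber_zmod_two_mul_self, ucMatrix_dualNumber,
    ucMatrix_of_field]
  have hne : ((a, x) : F × DualNumber (ZMod 2)) ≠ (a, y) := fun h => hxy (congrArg (·.2.fst) h)
  simp [Matrix.one_apply_ne hne, hxy]

end FieldProdDualNumber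

/-- for a finite field `F` of odd cardinality `q`, the unitary Cayley graph
of `F × (ℤ/2)[x]/(x²)` has no QFR at any time `kπ/q`, `k ∈ ℤ`. -/
theorem no_qfr_field_times_dual_numbers (F : Type*) [Field F] [Fintype F] (q : ℕ)
    (hq : Fintype.card F = q) (hodd : Odd q) (k : ℤ)
    (u v : F × DualNumber (ZMod 2)) :
    ¬ hasQFR (ucMatrix (F × DualNumber (ZMod 2))) u v ((k : ℝ) * Real.pi / q) := by
  classical
  subst hq
  obtain ⟨a, y⟩ := u
  intro hqfr
  set w : ℂ := Complex.I * ((k * Real.pi / Fintype.card F : ℝ) : ℂ)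
  have hw : Complex.exp (w * (2 * Fintype.card F)) = 1 :=
    Complex.exp_I_mul_int_mul_pi_div_mul_two_mul k Fintype.card_ne_zero
  have hH : transMatrix (ucMatrix (F × DualNumber (ZMod 2))) (k * Real.pi / Fintype.card F) =
      exp ((-w) • ((1 : Matrix F F ℂ) ⊗ₖ ucMatrix (DualNumber (ZMod 2)))) := by
    rw [transMatrix_eq_exp, exp_smul_ucMatrix_field_prod_dualNumber hw]
  obtain ⟨x, hxy, hxv⟩ := DualNumber.exists_fst_ne_and_ne y v.2
  have hsinh : Complex.sinh (-w * 2) = 0 := by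
    have h0 := hqfr.transMatrix_apply_eq_zero (p := (a, x)) (fun h => hxy (congrArg (·.2.fst) h))
      (fun h => hxv (by rw [← h]))
    rwa [hH, exp_smul_one_kronecker_ucMatrix_dualNumber_apply _ _ hxy, div_eq_zero_iff,
      or_iff_left two_ne_zero] at h0
  have hexp : Complex.exp (-w * 2) = 1 := by
    refine eq_one_of_sq_eq_one_of_pow_eq_one hodd (Complex.exp_sq_eq_one_of_sinh_eq_zero hsinh) ?_
    rw [← Complex.exp_nat_mul, show (Fintype.card F : ℂ) * (-w * 2) = -(w * (2 * Fintype.card F))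
      by ring, Complex.exp_neg, hw, inv_one]
  have hH1 : transMatrix (ucMatrix (F × DualNumber (ZMod 2))) (k * Real.pi / Fintype.card F) =
      1 := by
    rw [hH]
    exact Matrix.exp_smul_eq_one_of_mul_mul_eq_sq_smul two_ne_zero
      one_kronecker_ucMatrix_dualNumber_cube hexp
  exact hqfr.transMatrix_apply_ne_zero (by rw [hH1, Matrix.one_apply_ne hqfr.1.symm])
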